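/- Let Φ = {φ_ν}_{ν=1}^∞ be a sequence of functions in 𝒜(ℝⁿ) satisfying condition (i₀): for each ν ∈ ℕ and each A > 0 there exists C_{ν,A} > 0 such that φ_ν(x) + A·ln(1+‖x‖) ≤ φ_{ν+1}(x) + C_{ν,A} for all x ∈ ℝⁿ; condition (i₁): for each ν there exist σ_ν > 1 and γ_ν > 0 with φ_ν(σ_ν x) ≤ φ_{ν+1}(x) + γ_ν for all x ∈ ℝⁿ; and condition (i₂): for each ν there exists K_ν > 0 with φ_ν(x+ξ) ≤ φ_{ν+1}(x) + K_ν for all x ∈ [0,∞)ⁿ and ξ ∈ [0,1]ⁿ. Set ψ_ν = φ_ν[e]. Then E(Φ) = ∪_ν E(φ_ν) and ℋ(Φ) = ∪_ν ℋ(φ_ν) coincide as sets of entire functions. -/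

import Mathlib

open MeasureTheory Filter
open scoped BigOperators Topology

noncomputable section

abbrev En (n : ℕ) := EuclideanSpace ℝ (Fin n)
abbrev Cn (n : ℕ) := EuclideanSpace ℂ (Fin n)

def expComp {n : ℕ} (g : En n → ℝ) : En n → ℝ := fun x => g (WithLp.toLp 2 (fun j => Real.exp (x j)))

def starC {n : ℕ} (g : En n → ℝ) (x : En n) : ℝ := ⨆ y : En n, (∑ j, x j * y j - g y)

def imv {n : ℕ} (z : Cn n) : En n := WithLp.toLp 2 (fun j => (z j).im)

def toC {n : ℕ} (x : En n) : Cn n := WithLp.toLp 2 (fun j => ((x j : ℝ) : ℂ))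

def pd {n : ℕ} (i : Fin n) (f : En n → ℂ) : En n → ℂ :=
  fun x => fderiv ℝ f x (EuclideanSpace.single i (1:ℝ))

def Dm {n : ℕ} (α : Fin n → ℕ) (f : En n → ℂ) : En n → ℂ :=
  (List.finRange n).foldr (fun i g => (pd i)^[α i] g) f

def IsA {n : ℕ} (g : En n → ℝ) : Prop :=
  Continuous g ∧ (∀ x : En n, g x = g (WithLp.toLp 2 (fun j => |x j|))) ∧
  (∀ x y : En n, (∀ j, 0 ≤ x j) → (∀ j, x j ≤ y j) → g x ≤ g y) ∧
  Tendsto (fun x : En n => g x / ‖x‖) (cocompact (En n)) atTop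

def pWeight {n : ℕ} (φ : En n → ℝ) (m : ℕ) (f : Cn n → ℂ) (z : Cn n) : ℝ :=
  ‖f z‖ * (1 + ‖z‖) ^ m * Real.exp (-(φ (imv z)))

def pNorm {n : ℕ} (φ : En n → ℝ) (m : ℕ) (f : Cn n → ℂ) : ℝ := ⨆ z : Cn n, pWeight φ m f z

def memE {n : ℕ} (φ : En n → ℝ) (f : Cn n → ℂ) : Prop :=
  Differentiable ℂ f ∧ ∀ m : ℕ, BddAbove (Set.range (pWeight φ m f))

def rhoWeight {n : ℕ} (ψ : En n → ℝ) (m : ℕ) (f : En n → ℂ) (x : En n) (α : Fin n → ℕ) : ℝ :=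
  (1 + ‖x‖) ^ m * ‖Dm α f x‖ * Real.exp (starC ψ (WithLp.toLp 2 (fun j => (α j : ℝ)))) / (∏ j, Nat.factorial (α j) : ℝ)

def rhoNorm {n : ℕ} (ψ : En n → ℝ) (m : ℕ) (f : En n → ℂ) : ℝ :=
  ⨆ p : En n × (Fin n → ℕ), rhoWeight ψ m f p.1 p.2

def memEps {n : ℕ} (ψ : En n → ℝ) (f : En n → ℂ) : Prop :=
  ContDiff ℝ ⊤ f ∧ ∀ m : ℕ, BddAbove (Set.range fun p : En n × (Fin n → ℕ) => rhoWeight ψ m f p.1 p.2)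


/-- Young–Fenchel conjugate with values in the extended reals. -/
def econj {n : ℕ} (g : En n → EReal) (x : En n) : EReal :=
  ⨆ y : En n, (((∑ j, x j * y j : ℝ) : EReal) - g y)

/-- The second Young–Fenchel conjugate `(ψ*)*` of a real-valued function `ψ`. -/
def ddconj {n : ℕ} (ψ : En n → ℝ) : En n → EReal :=
  econj (econj (fun y => ((ψ y : ℝ) : EReal)))

/-- The weight `|f(z)|(1+‖z‖)^m e^{-(ψ*)*(ln(1+|Im z₁|),…,ln(1+|Im zₙ|))}` with `ψ = φ[e]`
(the value of `(ψ*)*` at the relevant points being finite, `EReal.toReal` returns it). -/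
def sigWeight {n : ℕ} (φ : En n → ℝ) (m : ℕ) (f : Cn n → ℂ) (z : Cn n) : ℝ :=
  ‖f z‖ * (1 + ‖z‖) ^ m *
    Real.exp (-(ddconj (expComp φ) (WithLp.toLp 2 (fun j => Real.log (1 + |(z j).im|)))).toReal)

def memH {n : ℕ} (φ : En n → ℝ) (f : Cn n → ℂ) : Prop :=
  Differentiable ℂ f ∧ ∀ m : ℕ, BddAbove (Set.range (sigWeight φ m f))

/-!
The inclusion `ℋ(φ_ν) ⊆ E(φ_{ν+1})` is pointwise: `(ψ_ν*)* ≤ ψ_ν`, and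
`ψ_ν(ln(1+|y|)) = φ_ν(1+|y|) ≤ φ_{ν+1}(y) + K_ν` by (i₂) and evenness.

For `E(φ_ν) ⊆ ℋ(φ_{ν+1})`, fix `z₀` and multiply `f` by `∏ⱼ (1 - i εⱼ zⱼ)^m`, where `εⱼ` is the
sign of `Im z₀ⱼ`; the product `g` still satisfies `|g(z)| ≤ e^{φ_ν(Im z) + b}`. By Hadamard's three
lines theorem `y ↦ log supₓ |g(x + iy)|` is convex, so Hahn–Banach gives affine minorants of
`φ_ν + b` whose value at `Im z₀` comes arbitrarily close to `log |g(z₀)|`; by evenness of `φ_ν`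
their slopes can be taken nonnegative. Pulling such a minorant back along `exp`, bounding it below
by its tangent plane at `ln(1 + |Im z₀|)` and absorbing `m Σ vⱼ` with (i₀), produces an affine
minorant of `ψ_{ν+1}`, hence a lower bound for `(ψ_{ν+1}*)*(ln(1 + |Im z₀|))`. Finally
`|1 - i εⱼ z₀ⱼ| (1 + |Im z₀ⱼ|) ≥ (1 + |z₀ⱼ|) / 2` turns `|g(z₀)| ∏ⱼ (1 + |Im z₀ⱼ|)^m` into
`|f(z₀)| (1 + ‖z₀‖)^m` up to the factor `2^{nm}`.
-/

variable {n : ℕ}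

lemma EuclideanSpace.norm_le_sum_norm {𝕜 ι : Type*} [RCLike 𝕜] [Fintype ι]
    (z : EuclideanSpace 𝕜 ι) : ‖z‖ ≤ ∑ j, ‖z j‖ := by
  classical
  calc ‖z‖ = ‖∑ j, EuclideanSpace.single j (z j)‖ := by congr 1; ext i; simp
    _ ≤ ∑ j, ‖EuclideanSpace.single j (z j)‖ := norm_sum_le _ _
    _ = ∑ j, ‖z j‖ := by simp

lemma Finset.one_add_sum_le_prod_one_add {ι : Type*} (s : Finset ι) {c : ι → ℝ}
    (hc : ∀ i ∈ s, 0 ≤ c i) : 1 + ∑ i ∈ s, c i ≤ ∏ i ∈ s, (1 + c i) := by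
  classical
  induction s using Finset.induction_on with
  | empty => simp
  | insert a s ha ih =>
    have hs := fun i hi => hc i (Finset.mem_insert_of_mem hi)
    rw [Finset.sum_insert ha, Finset.prod_insert ha]
    nlinarith [ih hs, hc a (Finset.mem_insert_self a s), Finset.sum_nonneg hs]

lemma EuclideanSpace.one_add_norm_le_prod {𝕜 ι : Type*} [RCLike 𝕜] [Fintype ι]
    (z : EuclideanSpace 𝕜 ι) : 1 + ‖z‖ ≤ ∏ j, (1 + ‖z j‖) :=
  (add_le_add_right z.norm_le_sum_norm 1).trans
    (Finset.univ.one_add_sum_le_prod_one_add fun _ _ => norm_nonneg _)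

lemma sum_le_mul_log_one_add_norm_exp (v : En n) :
    ∑ j, v j ≤ n * Real.log (1 + ‖(WithLp.toLp 2 fun j => Real.exp (v j) : En n)‖) := by
  set ev : En n := WithLp.toLp 2 fun j => Real.exp (v j)
  have hv : ∀ j, v j ≤ Real.log (1 + ‖ev‖) := fun j => by
    rw [← Real.log_exp (v j)]
    refine Real.log_le_log (Real.exp_pos _) ?_
    have := PiLp.norm_apply_le ev j
    rw [Real.norm_of_nonneg (Real.exp_pos _).le] at this
    linarith
  simpa using Finset.sum_le_sum fun j (_ : j ∈ Finset.univ) => hv j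

lemma ddconj_le (ψ : En n → ℝ) (x : En n) : ddconj ψ x ≤ ψ x := by
  refine iSup_le fun y => ?_
  have hy : ((∑ j, x j * y j : ℝ) : EReal) - ψ x ≤ econj (fun s => (ψ s : EReal)) y := by
    rw [Finset.sum_congr rfl fun j _ => mul_comm (x j) (y j)]
    exact le_iSup (fun s => ((∑ j, y j * s j : ℝ) : EReal) - ψ s) x
  calc ((∑ j, x j * y j : ℝ) : EReal) - econj (fun s => (ψ s : EReal)) y
      ≤ ((∑ j, x j * y j : ℝ) : EReal) - (((∑ j, x j * y j : ℝ) : EReal) - ψ x) :=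
        EReal.sub_le_sub le_rfl hy
    _ = ψ x := by rw [← EReal.coe_sub, ← EReal.coe_sub, sub_sub_cancel]

lemma le_ddconj_of_affine_le {ψ : En n → ℝ} {a : En n} {c : ℝ}
    (h : ∀ v, ∑ j, a j * v j + c ≤ ψ v) (u : En n) :
    ((∑ j, u j * a j + c : ℝ) : EReal) ≤ ddconj ψ u := by
  have ha : econj (fun s => (ψ s : EReal)) a ≤ ((-c : ℝ) : EReal) :=
    iSup_le fun s => by rw [← EReal.coe_sub]; exact EReal.coe_le_coe_iff.2 (by linarith [h s])
  calc ((∑ j, u j * a j + c : ℝ) : EReal)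
      = ((∑ j, u j * a j : ℝ) : EReal) - ((-c : ℝ) : EReal) := by
        rw [← EReal.coe_sub, sub_neg_eq_add]
    _ ≤ ((∑ j, u j * a j : ℝ) : EReal) - econj (fun s => (ψ s : EReal)) a :=
        EReal.sub_le_sub le_rfl ha
    _ ≤ ddconj ψ u :=
        le_iSup (fun y => ((∑ j, u j * y j : ℝ) : EReal) - econj (fun s => (ψ s : EReal)) y) a

lemma le_toReal_ddconj_of_affine_le {ψ : En n → ℝ} {a : En n} {c : ℝ}
    (h : ∀ v, ∑ j, a j * v j + c ≤ ψ v) (u : En n) :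
    ∑ j, u j * a j + c ≤ (ddconj ψ u).toReal := by
  have hlo := le_ddconj_of_affine_le h u
  have htop : ddconj ψ u ≠ ⊤ := ne_top_of_le_ne_top (EReal.coe_ne_top _) (ddconj_le ψ u)
  have := EReal.toReal_le_toReal hlo (EReal.coe_ne_bot _) htop
  rwa [EReal.toReal_coe] at this

lemma toReal_ddconj_le {ψ : En n → ℝ} (hψ : BddBelow (Set.range ψ)) (x : En n) :
    (ddconj ψ x).toReal ≤ ψ x := by
  obtain ⟨c, hc⟩ := hψ
  have hbot : ddconj ψ x ≠ ⊥ := by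
    refine ne_bot_of_le_ne_bot (EReal.coe_ne_bot (∑ j, x j * (0 : En n) j + c)) ?_
    exact le_ddconj_of_affine_le (fun v => by simpa using hc (Set.mem_range_self v)) x
  have := EReal.toReal_le_toReal (ddconj_le ψ x) hbot (EReal.coe_ne_top _)
  rwa [EReal.toReal_coe] at this

lemma IsA.bddBelow {g : En n → ℝ} (h : IsA g) : BddBelow (Set.range g) := by
  have hlim : Tendsto g (cocompact (En n)) atTop := by
    refine (h.2.2.2.atTop_mul_atTop₀ tendsto_norm_cocompact_atTop).congr' ?_
    filter_upwards [tendsto_norm_cocompact_atTop.eventually_gt_atTop 0] with x hx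
    exact div_mul_cancel₀ _ hx.ne'
  obtain ⟨x₀, hx₀⟩ := h.1.exists_forall_le hlim
  exact ⟨g x₀, Set.forall_mem_range.2 hx₀⟩

lemma toReal_ddconj_expComp_le {φ φ' : En n → ℝ} {K : ℝ} (hφ : BddBelow (Set.range φ))
    (heven : ∀ y : En n, φ' y = φ' (WithLp.toLp 2 fun j => |y j|))
    (hK : ∀ x ξ : En n, (∀ j, 0 ≤ x j) → (∀ j, ξ j ∈ Set.Icc (0:ℝ) 1) → φ (x + ξ) ≤ φ' x + K)
    (y : En n) :
    (ddconj (expComp φ) (WithLp.toLp 2 fun j => Real.log (1 + |y j|))).toReal ≤ φ' y + K := by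
  have hψ : BddBelow (Set.range (expComp φ)) := hφ.mono (Set.range_comp_subset_range _ φ)
  calc (ddconj (expComp φ) (WithLp.toLp 2 fun j => Real.log (1 + |y j|))).toReal
      ≤ expComp φ (WithLp.toLp 2 fun j => Real.log (1 + |y j|)) := toReal_ddconj_le hψ _
    _ = φ ((WithLp.toLp 2 fun j => |y j|) + WithLp.toLp 2 fun _ => 1) := by
        simp only [expComp]
        congr 1; ext j
        simp [Real.exp_log (by positivity : 0 < 1 + |y j|), add_comm]
    _ ≤ φ' (WithLp.toLp 2 fun j => |y j|) + K :=
        hK _ _ (fun j => abs_nonneg _) fun _ => ⟨zero_le_one, le_rfl⟩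
    _ = φ' y + K := by rw [← heven]

lemma memE_of_memH {φ φ' : En n → ℝ} {K : ℝ} (hφ : BddBelow (Set.range φ))
    (heven : ∀ y : En n, φ' y = φ' (WithLp.toLp 2 fun j => |y j|))
    (hK : ∀ x ξ : En n, (∀ j, 0 ≤ x j) → (∀ j, ξ j ∈ Set.Icc (0:ℝ) 1) → φ (x + ξ) ≤ φ' x + K)
    {f : Cn n → ℂ} (hf : memH φ f) : memE φ' f := by
  refine ⟨hf.1, fun m => ?_⟩
  obtain ⟨B, hB⟩ := hf.2 m
  refine ⟨Real.exp K * B, Set.forall_mem_range.2 fun z => ?_⟩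
  set D := (ddconj (expComp φ) (WithLp.toLp 2 fun j => Real.log (1 + |(z j).im|))).toReal
  have hD : D ≤ φ' (imv z) + K := toReal_ddconj_expComp_le hφ heven hK (imv z)
  calc pWeight φ' m f z = ‖f z‖ * (1 + ‖z‖) ^ m * Real.exp (-φ' (imv z)) := rfl
    _ ≤ ‖f z‖ * (1 + ‖z‖) ^ m * Real.exp (K + -D) := by gcongr; linarith
    _ = Real.exp K * sigWeight φ m f z := by rw [sigWeight, Real.exp_add]; ring
    _ ≤ Real.exp K * B := by gcongr; exact hB (Set.mem_range_self z)

def ofReIm (x y : En n) : Cn n := toC x + Complex.I • toC y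

@[simp] lemma ofReIm_apply (x y : En n) (j : Fin n) : ofReIm x y j = x j + Complex.I * y j := rfl

lemma imv_ofReIm (x y : En n) : imv (ofReIm x y) = y := by ext j; simp [imv]

lemma ofReIm_re_imv (z : Cn n) : ofReIm (WithLp.toLp 2 fun j => (z j).re) (imv z) = z := by
  ext j
  simpa [imv, mul_comm] using Complex.re_add_im (z j)

lemma ofReIm_add_smul_toC (x y d : En n) (w : ℂ) :
    ofReIm x y + (w * Complex.I) • toC d = ofReIm (x - w.im • d) (y + w.re • d) := by
  ext j
  apply Complex.ext <;> simp [toC]; ring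

@[fun_prop]
lemma Continuous.ofReIm {X : Type*} [TopologicalSpace X] {f g : X → En n} (hf : Continuous f)
    (hg : Continuous g) : Continuous fun q => ofReIm (f q) (g q) := by
  unfold _root_.ofReIm toC
  fun_prop

open Complex.HadamardThreeLines in
lemma norm_ofReIm_le_exp_convexComb {g : Cn n → ℂ} (hg : Differentiable ℂ g) {Φ : En n → ℝ}
    (hΦ : Continuous Φ) (hgΦ : ∀ z, ‖g z‖ ≤ Real.exp (Φ (imv z))) {y₀ y₁ : En n} {r₀ r₁ : ℝ}
    (h₀ : ∀ x, ‖g (ofReIm x y₀)‖ ≤ Real.exp r₀) (h₁ : ∀ x, ‖g (ofReIm x y₁)‖ ≤ Real.exp r₁)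
    {a b : ℝ} (ha : 0 ≤ a) (hb : 0 ≤ b) (hab : a + b = 1) (x : En n) :
    ‖g (ofReIm x (a • y₀ + b • y₁))‖ ≤ Real.exp (a * r₀ + b * r₁) := by
  set d := y₁ - y₀
  set h : ℂ → ℂ := fun w => g (ofReIm x y₀ + (w * Complex.I) • toC d)
  have hh : ∀ w, h w = g (ofReIm (x - w.im • d) (y₀ + w.re • d)) := fun w => by
    simp only [h, ofReIm_add_smul_toC]
  have hd : DiffContOnCl ℂ h (verticalStrip 0 1) := (hg.comp (by fun_prop)).diffContOnCl
  obtain ⟨M, hM⟩ := (isCompact_Icc (a := (0:ℝ)) (b := 1)).bddAbove_image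
    (f := fun s : ℝ => Φ (y₀ + s • d)) (by fun_prop : Continuous _).continuousOn
  have hB : BddAbove ((norm ∘ h) '' verticalClosedStrip 0 1) := by
    refine ⟨Real.exp M, Set.forall_mem_image.2 fun w hw => ?_⟩
    have hw' := hgΦ (ofReIm (x - w.im • d) (y₀ + w.re • d))
    rw [imv_ofReIm] at hw'
    rw [Function.comp_apply, hh]
    exact hw'.trans (Real.exp_le_exp.2 (hM (Set.mem_image_of_mem _ hw)))
  have hline₀ : ∀ w ∈ Complex.re ⁻¹' {0}, ‖h w‖ ≤ Real.exp r₀ := fun w hw => by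
    rw [hh, show w.re = 0 from hw, zero_smul, add_zero]; exact h₀ _
  have hline₁ : ∀ w ∈ Complex.re ⁻¹' {1}, ‖h w‖ ≤ Real.exp r₁ := fun w hw => by
    rw [hh, show w.re = 1 from hw, one_smul, add_sub_cancel]; exact h₁ _
  have hbmem : (b : ℂ) ∈ verticalClosedStrip 0 1 := by
    simp only [verticalClosedStrip, Set.mem_preimage, Complex.ofReal_re, Set.mem_Icc]
    constructor <;> linarith
  have key := norm_le_interp_of_mem_verticalClosedStrip₀₁' h hbmem hd hB hline₀ hline₁
  have hy : y₀ + b • d = a • y₀ + b • y₁ := by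
    rw [show a = 1 - b by linarith]; simp only [d, smul_sub, sub_smul, one_smul]; abel
  rw [hh, Complex.ofReal_re, Complex.ofReal_im, zero_smul, sub_zero, hy] at key
  rwa [← Real.exp_mul, ← Real.exp_mul, ← Real.exp_add, show 1 - b = a by linarith,
    mul_comm r₀, mul_comm r₁] at key

def expBoundSet (g : Cn n → ℂ) : Set (En n × ℝ) :=
  {q | ∀ x, ‖g (ofReIm x q.1)‖ ≤ Real.exp q.2}

lemma isClosed_expBoundSet {g : Cn n → ℂ} (hg : Continuous g) : IsClosed (expBoundSet g) := by
  simp only [expBoundSet, Set.ofPred_forall]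
  exact isClosed_iInter fun x => isClosed_le (by fun_prop) (by fun_prop)

lemma convex_expBoundSet {g : Cn n → ℂ} (hg : Differentiable ℂ g) {Φ : En n → ℝ}
    (hΦ : Continuous Φ) (hgΦ : ∀ z, ‖g z‖ ≤ Real.exp (Φ (imv z))) :
    Convex ℝ (expBoundSet g) := by
  rintro ⟨y₀, r₀⟩ h₀ ⟨y₁, r₁⟩ h₁ a b ha hb hab x
  exact norm_ofReIm_le_exp_convexComb hg hΦ hgΦ h₀ h₁ ha hb hab x

lemma exists_dual_affine_le_of_convex {E : Type*} [NormedAddCommGroup E] [NormedSpace ℝ E]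
    {S : Set (E × ℝ)} (hconv : Convex ℝ S) (hcl : IsClosed S) {Φ : E → ℝ}
    (hΦS : ∀ y r, Φ y ≤ r → (y, r) ∈ S) {p : E} {r₀ : ℝ} (hp : (p, r₀) ∉ S) :
    ∃ (T : StrongDual ℝ E) (c : ℝ), (∀ y, T y + c ≤ Φ y) ∧ r₀ < T p + c := by
  obtain ⟨L, u, hLS, hLp⟩ := geometric_hahn_banach_closed_point hconv hcl hp
  set T := L.comp (ContinuousLinearMap.inl ℝ E ℝ)
  set β := L (0, 1)
  have hL : ∀ y r, L (y, r) = T y + r * β := fun y r => by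
    rw [show (y, r) = (y, 0) + r • ((0 : E), (1 : ℝ)) by simp, map_add, map_smul, smul_eq_mul]
    rfl
  have hβ : β < 0 := by
    -- `S` contains the upward vertical ray from `(p, Φ p)`, which `L` must keep below `u`.
    by_contra! hβ
    have h₁ := hLS _ (hΦS p _ (le_max_left (Φ p) r₀))
    rw [hL] at h₁ hLp
    nlinarith [le_max_right (Φ p) r₀]
  refine ⟨-β⁻¹ • T, u / β, fun y => ?_, ?_⟩
  · have h₁ := hLS _ (hΦS y _ le_rfl)
    rw [hL] at h₁
    have : -β⁻¹ • T y + u / β = (u - T y) / β := by field_simp; ring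
    simp only [smul_apply, this]
    rw [div_le_iff_of_neg hβ]; linarith
  · rw [hL] at hLp
    have : -β⁻¹ • T p + u / β = (u - T p) / β := by field_simp; ring
    simp only [smul_apply, this]
    rw [lt_div_iff_of_neg hβ]; linarith

lemma StrongDual.apply_eq_sum {ι : Type*} [Fintype ι] (T : StrongDual ℝ (EuclideanSpace ℝ ι))
    (y : EuclideanSpace ℝ ι) :
    T y = ∑ j, ((InnerProductSpace.toDual ℝ (EuclideanSpace ℝ ι)).symm T) j * y j := by
  rw [← InnerProductSpace.toDual_symm_apply, PiLp.inner_apply]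
  simp only [RCLike.inner_apply, conj_trivial, mul_comm]

lemma exists_affine_le_of_norm_le_exp {g : Cn n → ℂ} (hg : Differentiable ℂ g) {Φ : En n → ℝ}
    (hΦ : Continuous Φ) (hgΦ : ∀ z, ‖g z‖ ≤ Real.exp (Φ (imv z))) (z₀ : Cn n) {r : ℝ}
    (hr : Real.exp r < ‖g z₀‖) :
    ∃ (t : En n) (c : ℝ), (∀ y, ∑ j, t j * y j + c ≤ Φ y) ∧ r < ∑ j, t j * (z₀ j).im + c := by
  have hΦS : ∀ y r, Φ y ≤ r → (y, r) ∈ expBoundSet g := fun y r hr x =>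
    (imv_ofReIm x y ▸ hgΦ (ofReIm x y)).trans (Real.exp_le_exp.2 hr)
  have hz₀ : (imv z₀, r) ∉ expBoundSet g := fun h =>
    (h (WithLp.toLp 2 fun j => (z₀ j).re)).not_gt (by rwa [ofReIm_re_imv])
  obtain ⟨T, c, hT, hTz₀⟩ := exists_dual_affine_le_of_convex (convex_expBoundSet hg hΦ hgΦ)
    (isClosed_expBoundSet hg.continuous) hΦS hz₀
  simp only [StrongDual.apply_eq_sum] at hT hTz₀
  exact ⟨_, c, hT, hTz₀⟩

lemma sum_abs_mul_add_le_of_even {Φ : En n → ℝ}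
    (heven : ∀ y : En n, Φ y = Φ (WithLp.toLp 2 fun j => |y j|))
    {t : En n} {c : ℝ} (h : ∀ y, ∑ j, t j * y j + c ≤ Φ y) (y : En n) :
    ∑ j, |t j| * y j + c ≤ Φ y := by
  set y' : En n := WithLp.toLp 2 fun j => if 0 ≤ t j then y j else -y j
  have hsum : ∑ j, t j * y' j = ∑ j, |t j| * y j := Finset.sum_congr rfl fun j _ => by
    by_cases hj : 0 ≤ t j
    · simp [y', hj, abs_of_nonneg hj]
    · simp [y', hj, abs_of_neg (not_le.1 hj)]
  have hΦ : Φ y' = Φ y := by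
    rw [heven y', heven y]
    congr 2; ext j
    by_cases hj : 0 ≤ t j <;> simp [y', hj]
  rw [← hsum, ← hΦ]
  exact h y'

lemma le_toReal_ddconj_expComp {φ φ' : En n → ℝ} {m : ℕ} {A C : ℝ} (hA : (n * m : ℝ) ≤ A)
    (hφφ' : ∀ x, φ x + A * Real.log (1 + ‖x‖) ≤ φ' x + C) {t : En n} (ht : ∀ j, 0 ≤ t j)
    {c : ℝ} (hmin : ∀ y, ∑ j, t j * y j + c ≤ φ y) (u : En n) :
    ∑ j, t j * Real.exp (u j) + c - C + m * ∑ j, u j ≤ (ddconj (expComp φ') u).toReal := by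
  set a : En n := WithLp.toLp 2 fun j => t j * Real.exp (u j) + m
  set c₃ := ∑ j, t j * Real.exp (u j) * (1 - u j) + c - C
  have haff : ∀ v, ∑ j, a j * v j + c₃ ≤ expComp φ' v := fun v => by
    set ev : En n := WithLp.toLp 2 fun j => Real.exp (v j)
    have htan : ∀ j, t j * Real.exp (u j) * (1 + v j - u j) ≤ t j * ev j := fun j => by
      rw [mul_assoc]
      refine mul_le_mul_of_nonneg_left ?_ (ht j)
      calc Real.exp (u j) * (1 + v j - u j) ≤ Real.exp (u j) * Real.exp (v j - u j) := by
            gcongr; linarith [Real.add_one_le_exp (v j - u j)]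
        _ = ev j := by rw [← Real.exp_add, add_sub_cancel]
    have hlog : (m : ℝ) * ∑ j, v j ≤ A * Real.log (1 + ‖ev‖) := by
      have hL : 0 ≤ Real.log (1 + ‖ev‖) := Real.log_nonneg (by linarith [norm_nonneg ev])
      calc (m : ℝ) * ∑ j, v j ≤ m * (n * Real.log (1 + ‖ev‖)) :=
            mul_le_mul_of_nonneg_left (sum_le_mul_log_one_add_norm_exp v) m.cast_nonneg
        _ ≤ A * Real.log (1 + ‖ev‖) := by rw [← mul_assoc, mul_comm (m : ℝ)]; gcongr
    have hsplit : ∑ j, a j * v j + c₃ =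
        ∑ j, (t j * Real.exp (u j) * (1 + v j - u j) + m * v j) + c - C := by
      rw [← add_sub_assoc, ← add_assoc, ← Finset.sum_add_distrib]
      congr 2
      exact Finset.sum_congr rfl fun j _ => by simp only [a]; ring
    have hsum : ∑ j, (t j * Real.exp (u j) * (1 + v j - u j) + m * v j) ≤
        ∑ j, t j * ev j + m * ∑ j, v j := by
      rw [Finset.sum_add_distrib, ← Finset.mul_sum]
      linarith [Finset.sum_le_sum fun j (_ : j ∈ Finset.univ) => htan j]
    show _ ≤ φ' ev
    linarith [hmin ev, hφφ' ev]
  have hval : ∑ j, u j * a j + c₃ = ∑ j, t j * Real.exp (u j) + c - C + m * ∑ j, u j := by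
    rw [Finset.mul_sum, ← add_sub_assoc, ← add_assoc, ← Finset.sum_add_distrib]
    have : ∀ j, u j * a j + t j * Real.exp (u j) * (1 - u j) = t j * Real.exp (u j) + m * u j :=
      fun j => by simp only [a]; ring
    simp only [this, Finset.sum_add_distrib]
    ring
  exact hval ▸ le_toReal_ddconj_of_affine_le haff u

def signedFactor (ε : Fin n → ℝ) (m : ℕ) (z : Cn n) : ℂ := ∏ j, (1 - Complex.I * ε j * z j) ^ m

lemma differentiable_signedFactor (ε : Fin n → ℝ) (m : ℕ) :
    Differentiable ℂ (signedFactor ε m) := by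
  unfold signedFactor
  fun_prop

lemma norm_one_sub_I_mul_le {ε : ℝ} (hε : |ε| = 1) (w : ℂ) :
    ‖1 - Complex.I * ε * w‖ ≤ 1 + ‖w‖ := by
  simpa [hε] using norm_sub_le (1 : ℂ) (Complex.I * ε * w)

lemma one_add_norm_le_of_mul_im_eq_abs {ε : ℝ} (hε : |ε| = 1) {w : ℂ} (hw : ε * w.im = |w.im|) :
    1 + ‖w‖ ≤ 2 * ‖1 - Complex.I * ε * w‖ * (1 + |w.im|) := by
  set v := 1 - Complex.I * ε * w
  have hre : 1 ≤ ‖v‖ := by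
    refine le_trans ?_ (Complex.abs_re_le_norm v)
    have : v.re = 1 + |w.im| := by simp [v, ← hw]
    rw [this, abs_of_nonneg (by positivity)]
    linarith [abs_nonneg w.im]
  have him : |w.re| ≤ ‖v‖ := by
    refine le_trans (le_of_eq ?_) (Complex.abs_im_le_norm v)
    simp [v, abs_mul, hε]
  calc 1 + ‖w‖ ≤ (1 + |w.re|) * (1 + |w.im|) := by
        nlinarith [Complex.norm_le_abs_re_add_abs_im w, abs_nonneg w.re, abs_nonneg w.im]
    _ ≤ 2 * ‖v‖ * (1 + |w.im|) := by gcongr; linarith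

lemma norm_signedFactor_le {ε : Fin n → ℝ} (hε : ∀ j, |ε j| = 1) (m : ℕ) (z : Cn n) :
    ‖signedFactor ε m z‖ ≤ (1 + ‖z‖) ^ (n * m) := by
  calc ‖signedFactor ε m z‖ = ∏ j, ‖1 - Complex.I * ε j * z j‖ ^ m := by
        simp only [signedFactor, norm_prod, norm_pow]
    _ ≤ ∏ _j : Fin n, (1 + ‖z‖) ^ m := by
        gcongr with j
        exact (norm_one_sub_I_mul_le (hε j) _).trans (by gcongr; exact PiLp.norm_apply_le z j)
    _ = (1 + ‖z‖) ^ (n * m) := by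
        rw [Finset.prod_const, Finset.card_univ, Fintype.card_fin, ← pow_mul, mul_comm]

lemma one_add_norm_pow_le_signedFactor {ε : Fin n → ℝ} (hε : ∀ j, |ε j| = 1) (m : ℕ) {z : Cn n}
    (hz : ∀ j, ε j * (z j).im = |(z j).im|) :
    (1 + ‖z‖) ^ m ≤ 2 ^ (n * m) * ‖signedFactor ε m z‖ * ∏ j, (1 + |(z j).im|) ^ m := by
  have h := z.one_add_norm_le_prod.trans (Finset.prod_le_prod (fun _ _ => by positivity)
    fun j _ => one_add_norm_le_of_mul_im_eq_abs (hε j) (hz j))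
  calc (1 + ‖z‖) ^ m ≤ (∏ j, 2 * ‖1 - Complex.I * ε j * z j‖ * (1 + |(z j).im|)) ^ m := by gcongr
    _ = _ := by
      simp only [signedFactor, norm_prod, norm_pow, Finset.prod_mul_distrib, mul_pow,
        Finset.prod_pow, Finset.prod_const, Finset.card_univ, Fintype.card_fin, pow_mul]

lemma norm_le_exp_toReal_ddconj {φ φ' : En n → ℝ} (hφ : Continuous φ)
    (heven : ∀ y : En n, φ y = φ (WithLp.toLp 2 fun j => |y j|)) {m : ℕ} {A C : ℝ}
    (hA : (n * m : ℝ) ≤ A) (hφφ' : ∀ x, φ x + A * Real.log (1 + ‖x‖) ≤ φ' x + C) {b : ℝ}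
    {g : Cn n → ℂ} (hg : Differentiable ℂ g) (hgφ : ∀ z, ‖g z‖ ≤ Real.exp (φ (imv z) + b))
    (z₀ : Cn n) :
    ‖g z₀‖ * ∏ j, (1 + |(z₀ j).im|) ^ m ≤ Real.exp ((ddconj (expComp φ')
      (WithLp.toLp 2 fun j => Real.log (1 + |(z₀ j).im|))).toReal + C + b) := by
  set u : En n := WithLp.toLp 2 fun j => Real.log (1 + |(z₀ j).im|)
  set D := (ddconj (expComp φ') u).toReal
  have hexp_u : ∀ j, Real.exp (u j) = 1 + |(z₀ j).im| := fun j => Real.exp_log (by positivity)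
  have hprod : ∏ j, (1 + |(z₀ j).im|) ^ m = Real.exp (m * ∑ j, u j) := by
    simp only [Finset.mul_sum, Real.exp_sum, Real.exp_nat_mul, hexp_u]
  have hr : ∀ r, Real.exp r < ‖g z₀‖ → r + m * ∑ j, u j ≤ D + C + b := fun r hr => by
    obtain ⟨t, c, ht, hrt⟩ := exists_affine_le_of_norm_le_exp (Φ := fun y => φ y + b) hg
      (hφ.add continuous_const) hgφ z₀ hr
    have ht' := sum_abs_mul_add_le_of_even heven (t := t) (c := c - b) fun y => by
      linarith [ht y]
    have hD := le_toReal_ddconj_expComp (t := WithLp.toLp 2 fun j => |t j|) hA hφφ'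
      (fun j => abs_nonneg (t j)) ht' u
    have htu : ∑ j, t j * (z₀ j).im ≤ ∑ j, |t j| * Real.exp (u j) :=
      Finset.sum_le_sum fun j _ => (le_abs_self _).trans <| by
        rw [hexp_u, abs_mul]; gcongr; linarith
    linarith
  rcases (norm_nonneg (g z₀)).eq_or_lt with hg₀ | hg₀
  · rw [← hg₀, zero_mul]; positivity
  have hlog : Real.log ‖g z₀‖ + m * ∑ j, u j ≤ D + C + b := by
    refine le_of_forall_lt_imp_le_of_dense fun s hs => ?_
    have := hr (s - m * ∑ j, u j) (by rw [← Real.lt_log_iff_exp_lt hg₀]; linarith)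
    linarith
  rw [hprod, ← Real.exp_log hg₀, ← Real.exp_add]
  exact Real.exp_le_exp.2 hlog

lemma norm_mul_pow_le_of_pWeight_le {φ : En n → ℝ} {m : ℕ} {f : Cn n → ℂ} {z : Cn n} {B : ℝ}
    (h : pWeight φ m f z ≤ B) : ‖f z‖ * (1 + ‖z‖) ^ m ≤ B * Real.exp (φ (imv z)) := by
  rwa [pWeight, Real.exp_neg, ← div_eq_mul_inv, div_le_iff₀ (Real.exp_pos _)] at h

lemma memH_of_memE {φ φ' : En n → ℝ} (hφ : Continuous φ)
    (heven : ∀ y : En n, φ y = φ (WithLp.toLp 2 fun j => |y j|))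
    (hφφ' : ∀ A > (0:ℝ), ∃ C, ∀ x, φ x + A * Real.log (1 + ‖x‖) ≤ φ' x + C)
    {f : Cn n → ℂ} (hf : memE φ f) : memH φ' f := by
  refine ⟨hf.1, fun m => ?_⟩
  obtain ⟨B, hB⟩ := hf.2 (n * m)
  obtain ⟨C, hC⟩ := hφφ' (n * m + 1) (by positivity)
  set b := Real.log (max B 1)
  refine ⟨2 ^ (n * m) * Real.exp (C + b), Set.forall_mem_range.2 fun z₀ => ?_⟩
  set ε : Fin n → ℝ := fun j => if 0 ≤ (z₀ j).im then 1 else -1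
  have hε : ∀ j, |ε j| = 1 := fun j => by by_cases h : 0 ≤ (z₀ j).im <;> simp [ε, h]
  have hεz₀ : ∀ j, ε j * (z₀ j).im = |(z₀ j).im| := fun j => by
    by_cases h : 0 ≤ (z₀ j).im
    · simp [ε, h, abs_of_nonneg h]
    · simp [ε, h, abs_of_neg (not_le.1 h)]
  have hgφ : ∀ z, ‖f z * signedFactor ε m z‖ ≤ Real.exp (φ (imv z) + b) := fun z => by
    rw [norm_mul, Real.exp_add, Real.exp_log (by positivity), mul_comm (Real.exp _)]
    calc ‖f z‖ * ‖signedFactor ε m z‖ ≤ ‖f z‖ * (1 + ‖z‖) ^ (n * m) := by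
          gcongr; exact norm_signedFactor_le hε m z
      _ ≤ max B 1 * Real.exp (φ (imv z)) :=
          norm_mul_pow_le_of_pWeight_le ((hB (Set.mem_range_self z)).trans (le_max_left B 1))
  have key := norm_le_exp_toReal_ddconj hφ heven (by linarith) hC
    (g := fun z => f z * signedFactor ε m z) (hf.1.mul (differentiable_signedFactor ε m)) hgφ z₀
  set D := (ddconj (expComp φ') (WithLp.toLp 2 fun j => Real.log (1 + |(z₀ j).im|))).toReal
  calc sigWeight φ' m f z₀ = ‖f z₀‖ * (1 + ‖z₀‖) ^ m * Real.exp (-D) := rfl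
    _ ≤ ‖f z₀‖ * (2 ^ (n * m) * ‖signedFactor ε m z₀‖ * ∏ j, (1 + |(z₀ j).im|) ^ m) *
          Real.exp (-D) := by
        gcongr; exact one_add_norm_pow_le_signedFactor hε m hεz₀
    _ = 2 ^ (n * m) * (‖f z₀ * signedFactor ε m z₀‖ * ∏ j, (1 + |(z₀ j).im|) ^ m) *
          Real.exp (-D) := by rw [norm_mul]; ring
    _ ≤ 2 ^ (n * m) * Real.exp (D + C + b) * Real.exp (-D) := by gcongr
    _ = 2 ^ (n * m) * Real.exp (C + b) := by
        rw [mul_assoc, ← Real.exp_add]; ring_nf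

theorem stmt5_general (n : ℕ) (φ : ℕ → En n → ℝ)
    (hA : ∀ ν, IsA (φ ν))
    (hi0 : ∀ ν : ℕ, ∀ A > (0:ℝ), ∃ C > (0:ℝ), ∀ x : En n,
      φ ν x + A * Real.log (1 + ‖x‖) ≤ φ (ν+1) x + C)
    (hi2 : ∀ ν : ℕ, ∃ K > (0:ℝ), ∀ x ξ : En n, (∀ j, 0 ≤ x j) → (∀ j, ξ j ∈ Set.Icc (0:ℝ) 1) →
      φ ν (x + ξ) ≤ φ (ν+1) x + K) :
    {f : Cn n → ℂ | ∃ ν, memE (φ ν) f} = {f : Cn n → ℂ | ∃ ν, memH (φ ν) f} := by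
  ext f
  constructor
  · rintro ⟨ν, hf⟩
    have hφφ' : ∀ A > (0:ℝ), ∃ C, ∀ x, φ ν x + A * Real.log (1 + ‖x‖) ≤ φ (ν+1) x + C :=
      fun A hA' => (hi0 ν A hA').imp fun _ hC => hC.2
    exact ⟨ν + 1, memH_of_memE (hA ν).1 (hA ν).2.1 hφφ' hf⟩
  · rintro ⟨ν, hf⟩
    obtain ⟨K, -, hK⟩ := hi2 ν
    exact ⟨ν + 1, memE_of_memH (hA ν).bddBelow (hA (ν+1)).2.1 hK hf⟩

theorem stmt5 (n : ℕ) (φ : ℕ → En n → ℝ)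
    (hA : ∀ ν, IsA (φ ν))
    (hi0 : ∀ ν : ℕ, ∀ A > (0:ℝ), ∃ C > (0:ℝ), ∀ x : En n,
      φ ν x + A * Real.log (1 + ‖x‖) ≤ φ (ν+1) x + C)
    (hi1 : ∀ ν : ℕ, ∃ σ > (1:ℝ), ∃ γ > (0:ℝ), ∀ x : En n, φ ν (σ • x) ≤ φ (ν+1) x + γ)
    (hi2 : ∀ ν : ℕ, ∃ K > (0:ℝ), ∀ x ξ : En n, (∀ j, 0 ≤ x j) → (∀ j, ξ j ∈ Set.Icc (0:ℝ) 1) →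
      φ ν (x + ξ) ≤ φ (ν+1) x + K) :
    {f : Cn n → ℂ | ∃ ν, memE (φ ν) f} = {f : Cn n → ℂ | ∃ ν, memH (φ ν) f} :=
  stmt5_general n φ hA hi0 hi2
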